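/- For a monotone Boolean function f and a positive instance x, the length of every shortest PI-explanation of x equals the number of true features in every MC-explanation of x. -/

import Mathlib

/-! Both quantities equal the least size of a sufficient set of features. The true features of an
MC-explanation form a sufficient set, since by monotonicity every instance agreeing with `x` there
lies above a positive instance; it contains a PI-explanation. Conversely, switching off every
feature of `x` outside a sufficient set `S` gives a positive instance below `x` with at most
`#S` true features. -/

open Finset

def trueCount {n : ℕ} (x : Fin n → Bool) : ℕ :=
  (Finset.univ.filter (fun i => x i = true)).card

def Mono {n : ℕ} (f : (Fin n → Bool) → Bool) : Prop :=
  ∀ x y : Fin n → Bool, (∀ i, x i ≤ y i) → f x ≤ f y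

def MCExpl {n : ℕ} (f : (Fin n → Bool) → Bool) (x xs : Fin n → Bool) : Prop :=
  f xs = true ∧ (∀ i, xs i ≤ x i) ∧
    ∀ x' : Fin n → Bool, f x' = true → (∀ i, x' i ≤ x i) → trueCount xs ≤ trueCount x'

def Suff {n : ℕ} (f : (Fin n → Bool) → Bool) (x : Fin n → Bool) (S : Finset (Fin n)) : Prop :=
  ∀ y : Fin n → Bool, (∀ i ∈ S, y i = x i) → f y = f x

def PIExpl {n : ℕ} (f : (Fin n → Bool) → Bool) (x : Fin n → Bool) (S : Finset (Fin n)) : Prop :=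
  Suff f x S ∧ ∀ T ⊂ S, ¬ Suff f x T

variable {n : ℕ} {f : (Fin n → Bool) → Bool} {x : Fin n → Bool}

theorem Mono.eq_true_of_le (hf : Mono f) {y z : Fin n → Bool} (hy : f y = true)
    (hyz : ∀ i, y i ≤ z i) : f z = true :=
  top_le_iff.mp <| show true ≤ f z from hy ▸ hf y z hyz

theorem Suff.exists_piExpl_subset {A : Finset (Fin n)} (hA : Suff f x A) :
    ∃ B ⊆ A, PIExpl f x B := by
  obtain ⟨B, hBA, hBsuff, hBmin⟩ := exists_minimal_le_of_wellFoundedLT (Suff f x) A hA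
  exact ⟨B, hBA, hBsuff, fun T hTB hT => (hBmin hT hTB.le).not_ssubset hTB⟩

theorem suff_filter_eq_true_of_le (hf : Mono f) {xs : Fin n → Bool} (hxs : f xs = true)
    (hle : ∀ i, xs i ≤ x i) : Suff f x (univ.filter (xs · = true)) := by
  intro y hy
  have hxs_le_y : ∀ i, xs i ≤ y i := by
    intro i
    cases hi : xs i
    · exact Bool.false_le _
    · have hxi : x i = true := top_le_iff.mp <| show true ≤ x i from hi ▸ hle i
      simp [hy i (by simpa using hi), hxi]
  rw [hf.eq_true_of_le hxs hxs_le_y, hf.eq_true_of_le hxs hle]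

theorem MCExpl.exists_piExpl_card_le (hf : Mono f) {xs : Fin n → Bool} (hmc : MCExpl f x xs) :
    ∃ B, PIExpl f x B ∧ B.card ≤ trueCount xs := by
  obtain ⟨B, hBA, hB⟩ := (suff_filter_eq_true_of_le hf hmc.1 hmc.2.1).exists_piExpl_subset
  exact ⟨B, hB, card_le_card hBA⟩

theorem MCExpl.trueCount_le_card (hf : Mono f) {xs : Fin n → Bool} (hmc : MCExpl f x xs)
    {S : Finset (Fin n)} (hS : Suff f x S) : trueCount xs ≤ S.card := by
  set x' : Fin n → Bool := fun i => if i ∈ S then x i else false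
  have hx' : f x' = true := by
    rw [hS x' fun i hi => if_pos hi]
    exact hf.eq_true_of_le hmc.1 hmc.2.1
  have hx'_le : ∀ i, x' i ≤ x i := by
    intro i
    by_cases hi : i ∈ S <;> simp [x', hi]
  calc trueCount xs ≤ trueCount x' := hmc.2.2 x' hx' hx'_le
    _ ≤ S.card := card_le_card fun i hi => by
      by_contra hiS
      simp [x', hiS] at hi

theorem stmt6_general {n : ℕ} (f : (Fin n → Bool) → Bool) (hf : Mono f)
    (x : Fin n → Bool)
    (S : Finset (Fin n)) (hpi : PIExpl f x S)
    (hshort : ∀ T : Finset (Fin n), PIExpl f x T → S.card ≤ T.card)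
    (xs : Fin n → Bool) (hmc : MCExpl f x xs) :
    S.card = trueCount xs := by
  obtain ⟨B, hB, hBcard⟩ := hmc.exists_piExpl_card_le hf
  exact le_antisymm ((hshort B hB).trans hBcard) (hmc.trueCount_le_card hf hpi.1)

theorem stmt6 {n : ℕ} (f : (Fin n → Bool) → Bool) (hf : Mono f)
    (x : Fin n → Bool) (hx : f x = true)
    (S : Finset (Fin n)) (hpi : PIExpl f x S)
    (hshort : ∀ T : Finset (Fin n), PIExpl f x T → S.card ≤ T.card)
    (xs : Fin n → Bool) (hmc : MCExpl f x xs) :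
    S.card = trueCount xs :=
  stmt6_general f hf x S hpi hshort xs hmc
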